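/- arXiv:2510.12057 — 4 statements merged into one kernel-verified Lean document; each statement's English description precedes it below -/
import Mathlib

section
/- Let z : ℤ → k be a sequence with z(n) ≠ 0 for all n and z(n) + z(n+1)^{−1} = [2]_q for all n ∈ ℤ. Then there exist x, y ∈ k, not both zero, such that for every n ∈ ℤ one has x·q^n − y·q^{−n} ≠ 0 and z(n) = (x·q^{n−1} − y·q^{−(n−1)})/(x·q^n − y·q^{−n}). (The nonvanishing of x·q^n − y·q^{−n} for all n expresses that the point [x : y] of the projective line ℙ¹(k) does not lie in the set q^{2ℤ}.) -/
/-!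
The substitution `z n = f (n - 1) / f n` turns the Riccati recurrence
`z n + 1 / z (n + 1) = q + q⁻¹` into the linear recurrence
`f (n + 1) + f (n - 1) = (q + q⁻¹) f n`, which `f n = x q^n - y q^(-n)` satisfies for all `x, y`.
Since `q ≠ q⁻¹`, the pair `(x, y)` can be chosen with `f 0 = 1` and `f (-1) = z 0`; then
`f n ≠ 0` and `z n f n = f (n - 1)` propagate from `n = 0` upwards and downwards, because `z`
never vanishes.
-/

section ThreeTermRecurrence

variable {k : Type*} [Field k] {c : k} {z f : ℤ → k}

theorem riccati_step_succ (hz : ∀ n, z n ≠ 0) (hrec : ∀ n, z n + (z (n + 1))⁻¹ = c)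
    (hf : ∀ n, f (n + 1) + f (n - 1) = c * f n) {n : ℤ}
    (hn : f n ≠ 0 ∧ z n * f n = f (n - 1)) :
    f (n + 1) ≠ 0 ∧ z (n + 1) * f (n + 1) = f (n + 1 - 1) := by
  obtain ⟨hfn, hzn⟩ := hn
  have hnext : f (n + 1) = (z (n + 1))⁻¹ * f n := by
    rw [show (z (n + 1))⁻¹ = c - z n by linear_combination hrec n]
    linear_combination hf n + hzn
  refine ⟨hnext ▸ mul_ne_zero (inv_ne_zero (hz _)) hfn, ?_⟩
  rw [add_sub_cancel_right, hnext, ← mul_assoc, mul_inv_cancel₀ (hz _), one_mul]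

theorem riccati_step_pred (hz : ∀ n, z n ≠ 0) (hrec : ∀ n, z n + (z (n + 1))⁻¹ = c)
    (hf : ∀ n, f (n + 1) + f (n - 1) = c * f n) {n : ℤ}
    (hn : f n ≠ 0 ∧ z n * f n = f (n - 1)) :
    f (n - 1) ≠ 0 ∧ z (n - 1) * f (n - 1) = f (n - 1 - 1) := by
  obtain ⟨hfn, hzn⟩ := hn
  refine ⟨hzn ▸ mul_ne_zero (hz _) hfn, ?_⟩
  have hprev : (z n)⁻¹ * f (n - 1) = f n := by
    rw [← hzn, ← mul_assoc, inv_mul_cancel₀ (hz _), one_mul]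
  have hc := hrec (n - 1)
  have hf' := hf (n - 1)
  rw [sub_add_cancel] at hc hf'
  linear_combination f (n - 1) * hc - hf' - hprev

theorem riccati_eq_div_of_linear (hz : ∀ n, z n ≠ 0) (hrec : ∀ n, z n + (z (n + 1))⁻¹ = c)
    (hf : ∀ n, f (n + 1) + f (n - 1) = c * f n) (hf0 : f 0 ≠ 0) (hzf0 : z 0 * f 0 = f (-1))
    (n : ℤ) : f n ≠ 0 ∧ z n * f n = f (n - 1) := by
  induction n using Int.induction_on with
  | zero => exact ⟨hf0, hzf0⟩
  | succ n ih => exact riccati_step_succ hz hrec hf ih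
  | pred n ih => exact riccati_step_pred hz hrec hf ih

end ThreeTermRecurrence

theorem zpow_sub_zpow_neg_three_term_recurrence {k : Type*} [Field k] {q : k} (hq : q ≠ 0)
    (x y : k) (n : ℤ) :
    (x * q ^ (n + 1) - y * q ^ (-(n + 1))) + (x * q ^ (n - 1) - y * q ^ (-(n - 1))) =
      (q + q⁻¹) * (x * q ^ n - y * q ^ (-n)) := by
  rw [neg_add, neg_sub', zpow_add₀ hq, zpow_sub₀ hq, zpow_sub₀ hq, zpow_add₀ hq, zpow_one,
    zpow_neg_one, div_inv_eq_mul]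
  ring

theorem inv_sub_ne_zero_of_sq_ne_one {k : Type*} [Field k] {q : k} (hq : q ≠ 0)
    (hq2 : q ^ 2 ≠ 1) : q⁻¹ - q ≠ 0 := by
  intro h
  apply hq2
  rw [sub_eq_zero] at h
  rw [sq]
  nth_rewrite 1 [← h]
  exact inv_mul_cancel₀ hq

/-- The "quantum elementary fact": if `z : ℤ → k` is a sequence of nonzero
elements satisfying `z n + (z (n+1))⁻¹ = [2]_q = q + q⁻¹`, then there is a
point `[x : y]` of `ℙ¹(k)` avoiding `q^{2ℤ}` (i.e. `x*q^n - y*q^{-n} ≠ 0`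
for all `n`) with `z n = [n - 1 ; x:y]_q / [n ; x:y]_q`. -/
theorem quantum_elementary_fact {k : Type*} [Field k]
    (q : k) (hq : q ≠ 0) (hroot : ∀ m : ℤ, m ≠ 0 → q ^ m ≠ 1)
    (z : ℤ → k) (hz : ∀ n : ℤ, z n ≠ 0)
    (hrec : ∀ n : ℤ, z n + (z (n + 1))⁻¹ = q + q⁻¹) :
    ∃ x y : k, ¬(x = 0 ∧ y = 0) ∧
      ∀ n : ℤ, x * q ^ n - y * q ^ (-n) ≠ 0 ∧
        z n = (x * q ^ (n - 1) - y * q ^ (-(n - 1))) / (x * q ^ n - y * q ^ (-n)) := by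
  have hq2 : q⁻¹ - q ≠ 0 :=
    inv_sub_ne_zero_of_sq_ne_one hq (by exact_mod_cast hroot 2 two_ne_zero)
  set x := (z 0 - q) / (q⁻¹ - q)
  set f : ℤ → k := fun n => x * q ^ n - (x - 1) * q ^ (-n)
  have hf0 : f 0 = 1 := by simp [f]
  have hzf0 : z 0 * f 0 = f (-1) := by
    have hx : x * (q⁻¹ - q) = z 0 - q := div_mul_cancel₀ _ hq2
    simp only [hf0, f, neg_neg, zpow_neg_one, zpow_one]
    linear_combination -hx
  have key := riccati_eq_div_of_linear hz hrec
    (zpow_sub_zpow_neg_three_term_recurrence hq x (x - 1)) (hf0 ▸ one_ne_zero) hzf0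
  refine ⟨x, x - 1, fun ⟨hx, hy⟩ => by simp [hx] at hy, fun n => ⟨(key n).1, ?_⟩⟩
  rw [eq_div_iff (key n).1]
  exact (key n).2
end

section
/- For all natural numbers k, l and every integer m with m ∉ {0, 1, …, l}, the following identity holds in k: ∑_{n=0}^{l} (−1)^n · ([m−l]_q/[m−n]_q) · qbinom(k, l−n) · qbinom(k+n, k) = (−1)^l · qbinom(m+k, l) · qbinom(m, l)^{−1}. (Under the hypothesis on m, all the elements [m−n]_q for 0 ≤ n ≤ l, as well as qbinom(m, l), are nonzero, so all quotients are defined.) -/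
open Finset

/-- The symmetric `q`-integer `[m]_q = (q^m - q^{-m})/(q - q⁻¹)`. -/
noncomputable def qint {k : Type*} [Field k] (q : k) (m : ℤ) : k :=
  (q ^ m - q ^ (-m)) / (q - q⁻¹)

/-- The `q`-factorial `[r]_q! = [1]_q [2]_q ⋯ [r]_q`. -/
noncomputable def qfact {k : Type*} [Field k] (q : k) : ℕ → k
  | 0 => 1
  | r + 1 => qfact q r * qint q (r + 1)

/-- The generalized `q`-binomial coefficient
`qbinom(m, r) = [m]_q [m-1]_q ⋯ [m-r+1]_q / [r]_q!` with `m ∈ ℤ`, `r ∈ ℕ`. -/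
noncomputable def qbinom {k : Type*} [Field k] (q : k) (m : ℤ) (r : ℕ) : k :=
  (∏ i ∈ Finset.range r, qint q (m - i)) / qfact q r

section helpers
variable {k : Type*} [Field k] {q : k} (hq : q ≠ 0)
  (hroot : ∀ m : ℤ, m ≠ 0 → q ^ m ≠ 1)

include hq hroot

lemma hd : q - q⁻¹ ≠ 0 := by
  intro h
  have hq2 : q = q⁻¹ := sub_eq_zero.mp h
  apply hroot 2 (by norm_num)
  have : q ^ (2:ℤ) = q * q := by
    rw [show (2:ℤ) = 1 + 1 by norm_num, zpow_add₀ hq, zpow_one]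
  rw [this]
  nth_rewrite 2 [hq2]
  exact mul_inv_cancel₀ hq

lemma qint_ne_zero {m : ℤ} (hm : m ≠ 0) : qint q m ≠ 0 := by
  rw [qint, div_ne_zero_iff]
  refine ⟨?_, hd hq hroot⟩
  intro h
  have h2 : q ^ m = q ^ (-m) := sub_eq_zero.mp h
  apply hroot (2 * m) (by omega)
  have h3 : q ^ (2 * m) = q ^ m * q ^ (-m) := by
    rw [two_mul, zpow_add₀ hq, ← h2]
  rw [h3, ← zpow_add₀ hq]
  simp

lemma qfact_ne_zero (r : ℕ) : qfact q r ≠ 0 := by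
  induction r with
  | zero => exact one_ne_zero
  | succ n ih =>
    rw [qfact]
    exact mul_ne_zero ih (qint_ne_zero hq hroot (by omega))

end helpers

section helpers2
variable {k : Type*} [Field k] {q : k}

lemma qint_zero : qint q 0 = 0 := by simp [qint]

lemma qint_neg (m : ℤ) : qint q (-m) = - qint q m := by
  rw [qint, qint, neg_neg, ← neg_div, neg_sub]

lemma qfact_eq_prod (r : ℕ) : qfact q r = ∏ t ∈ range r, qint q (t + 1) := by
  induction r with
  | zero => simp [qfact]
  | succ n ih => rw [prod_range_succ, ← ih, qfact]

lemma qfact_eq (n r : ℕ) (h : r ≤ n) :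
    qfact q n = qfact q (n - r) * ∏ i ∈ range r, qint q ((n:ℤ) - i) := by
  induction r with
  | zero => simp
  | succ r ih =>
    rw [prod_range_succ, ih (by omega)]
    have h1 : n - r = (n - (r+1)) + 1 := by omega
    rw [h1, qfact]
    have h2 : ((n - (r+1) : ℕ) : ℤ) + 1 = (n : ℤ) - r := by omega
    rw [h2]
    ring
end helpers2

section keyA
variable {k : Type*} [Field k] {q : k} (hq : q ≠ 0)
  (hroot : ∀ m : ℤ, m ≠ 0 → q ^ m ≠ 1)
include hq hroot

lemma keyA (K L j : ℕ) (hj : j ≤ L) :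
    qbinom q (K:ℤ) (L-j) * qbinom q ((K:ℤ)+(j:ℤ)) K * qfact q j * qfact q (L-j)
      = ∏ i ∈ range L, qint q ((j:ℤ) + K - i) := by
  by_cases hc : L - j ≤ K
  · have hf := qfact_ne_zero hq hroot
    have h1 : (∏ i ∈ range (L-j), qint q ((K:ℤ) - i))
        = qfact q K / qfact q (K - (L-j)) := by
      rw [eq_div_iff (hf _), qfact_eq K (L-j) hc]; ring
    have h2 : (∏ i ∈ range K, qint q ((K:ℤ)+(j:ℤ) - i))
        = qfact q (K+j) / qfact q j := by
      rw [eq_div_iff (hf _)]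
      have h := qfact_eq (q := q) (K+j) K (by omega)
      rw [show (K+j) - K = j by omega] at h
      rw [show ∏ i ∈ range K, qint q ((K:ℤ)+(j:ℤ) - i)
          = ∏ i ∈ range K, qint q (((K+j:ℕ):ℤ) - i) from
        prod_congr rfl (by intro i _; congr 1 <;> omega)]
      rw [h]; ring
    have h3 : (∏ i ∈ range L, qint q ((j:ℤ) + K - i))
        = qfact q (K+j) / qfact q (K+j-L) := by
      rw [eq_div_iff (hf _)]
      have h := qfact_eq (q := q) (K+j) L (by omega)
      rw [show ∏ i ∈ range L, qint q ((j:ℤ)+(K:ℤ) - i)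
          = ∏ i ∈ range L, qint q (((K+j:ℕ):ℤ) - i) from
        prod_congr rfl (by intro i _; congr 1 <;> omega)]
      rw [h]; ring
    rw [qbinom, qbinom, h1, h2, h3, show K - (L-j) = K+j-L by omega]
    field_simp [hf K, hf j, hf (L-j), hf (K+j-L), hf (K+j)]
  · push_neg at hc
    have hz1 : qbinom q (K:ℤ) (L-j) = 0 := by
      rw [qbinom, _root_.div_eq_zero_iff]
      left
      exact Finset.prod_eq_zero (i := K) (Finset.mem_range.mpr (by omega))
        (by rw [sub_self]; exact qint_zero)
    have hz2 : (∏ i ∈ range L, qint q ((j:ℤ) + K - i)) = 0 := by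
      refine Finset.prod_eq_zero (i := j + K) (Finset.mem_range.mpr (by omega)) ?_
      rw [show (j:ℤ) + K - ((j+K:ℕ):ℤ) = 0 by push_cast; ring]
      exact qint_zero
    rw [hz1, hz2]
    ring

end keyA

section factor
variable {k : Type*} [Field k] {q : k} (hq : q ≠ 0)
  (hroot : ∀ m : ℤ, m ≠ 0 → q ^ m ≠ 1)
include hq hroot

lemma factor (x c : ℤ) :
    q ^ c * q ^ (2*x) - q ^ (-c) = q ^ x * (q - q⁻¹) * qint q (x + c) := by
  rw [qint, mul_assoc, mul_div_assoc', mul_div_cancel_left₀ _ (hd hq hroot)]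
  rw [mul_sub, ← zpow_add₀ hq, ← zpow_add₀ hq, ← zpow_add₀ hq]
  rw [show c + 2*x = x + (x + c) by ring, show (-c : ℤ) = x + -(x+c) by ring]
end factor

section inner
variable {k : Type*} [Field k] {q : k} (hq : q ≠ 0)
  (hroot : ∀ m : ℤ, m ≠ 0 → q ^ m ≠ 1)
include hq hroot

lemma inner (K L j : ℕ) (hj : j ≤ L) :
    ∑ n ∈ range (L+1), ((-1:k)^n * qbinom q (K:ℤ) (L-n) * qbinom q ((K:ℤ)+(n:ℤ)) K) *
        ∏ i ∈ (range (L+1)).erase n, qint q ((j:ℤ) - i)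
      = (-1:k)^L * ∏ i ∈ range L, qint q ((j:ℤ) + K - i) := by
  rw [Finset.sum_eq_single_of_mem j (mem_range.mpr (by omega)) (fun n hn hne => by
    rw [Finset.prod_eq_zero (i := j) (Finset.mem_erase.mpr
      ⟨Ne.symm hne, mem_range.mpr (by omega)⟩)
      (by rw [sub_self]; exact qint_zero), mul_zero])]
  have hsplit : (range (L+1)).erase j = range j ∪ Ico (j+1) (L+1) := by
    ext i
    simp only [Finset.mem_erase, Finset.mem_range, Finset.mem_union, Finset.mem_Ico]
    omega
  have hdisj : Disjoint (range j) (Ico (j+1) (L+1)) := by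
    rw [Finset.disjoint_left]
    intro a ha hb
    simp only [Finset.mem_range] at ha
    simp only [Finset.mem_Ico] at hb
    omega
  rw [hsplit, Finset.prod_union hdisj]
  have e1 : ∏ i ∈ range j, qint q ((j:ℤ) - i) = qfact q j := by
    have h := qfact_eq (q := q) j j le_rfl
    rw [Nat.sub_self] at h
    rw [h]
    simp [qfact]
  have e2 : ∏ i ∈ Ico (j+1) (L+1), qint q ((j:ℤ) - i)
      = (-1:k)^(L-j) * qfact q (L-j) := by
    rw [Finset.prod_Ico_eq_prod_range, show (L+1) - (j+1) = L - j by omega]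
    have h : ∀ t ∈ range (L-j), qint q ((j:ℤ) - ((j+1+t : ℕ):ℤ))
        = (-1) * qint q ((t:ℤ)+1) := by
      intro t _
      rw [show ((j:ℤ) - ((j+1+t:ℕ):ℤ)) = -((t:ℤ)+1) by push_cast; ring, qint_neg]
      ring
    rw [Finset.prod_congr rfl h, Finset.prod_mul_distrib, Finset.prod_const, card_range,
        qfact_eq_prod]
  rw [e1, e2]
  have hsgn : (-1:k)^j * (-1:k)^(L-j) = (-1:k)^L := by
    rw [← pow_add]
    congr 1
    omega
  calc (-1:k)^j * qbinom q (K:ℤ) (L-j) * qbinom q ((K:ℤ)+(j:ℤ)) K *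
        (qfact q j * ((-1:k)^(L-j) * qfact q (L-j)))
      = ((-1:k)^j * (-1:k)^(L-j)) *
        (qbinom q (K:ℤ) (L-j) * qbinom q ((K:ℤ)+(j:ℤ)) K * qfact q j * qfact q (L-j)) := by
        ring
    _ = (-1:k)^L * ∏ i ∈ range L, qint q ((j:ℤ) + K - i) := by
        rw [hsgn, keyA hq hroot K L j hj]
end inner

section star
variable {k : Type*} [Field k] {q : k} (hq : q ≠ 0)
  (hroot : ∀ m : ℤ, m ≠ 0 → q ^ m ≠ 1)
include hq hroot

lemma star (K L : ℕ) (m : ℤ) :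
    ∑ n ∈ range (L+1), ((-1:k)^n * qbinom q (K:ℤ) (L-n) * qbinom q ((K:ℤ)+(n:ℤ)) K) *
        ∏ i ∈ (range (L+1)).erase n, qint q (m - i)
      = (-1:k)^L * ∏ i ∈ range L, qint q (m + K - i) := by
  have hd' : q - q⁻¹ ≠ 0 := hd hq hroot
  set P : Polynomial k := ∑ n ∈ range (L+1),
      Polynomial.C ((-1:k)^n * qbinom q (K:ℤ) (L-n) * qbinom q ((K:ℤ)+(n:ℤ)) K) *
        ∏ i ∈ (range (L+1)).erase n,
          (Polynomial.C (q ^ (-(i:ℤ))) * Polynomial.X - Polynomial.C (q ^ (i:ℤ))) with hP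
  set Q : Polynomial k := Polynomial.C ((-1:k)^L) *
      ∏ i ∈ range L,
        (Polynomial.C (q ^ ((K:ℤ) - i)) * Polynomial.X - Polynomial.C (q ^ ((i:ℤ) - K)))
    with hQdef
  have evalP : ∀ x : ℤ, P.eval (q ^ (2*x)) = (q ^ x * (q - q⁻¹))^L *
      ∑ n ∈ range (L+1), ((-1:k)^n * qbinom q (K:ℤ) (L-n) * qbinom q ((K:ℤ)+(n:ℤ)) K) *
        ∏ i ∈ (range (L+1)).erase n, qint q (x - i) := by
    intro x
    rw [hP, Polynomial.eval_finset_sum, Finset.mul_sum]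
    refine Finset.sum_congr rfl fun n hn => ?_
    rw [Polynomial.eval_mul, Polynomial.eval_C, Polynomial.eval_prod]
    have hprod : ∀ i ∈ (range (L+1)).erase n,
        (Polynomial.C (q ^ (-(i:ℤ))) * Polynomial.X
          - Polynomial.C (q ^ (i:ℤ))).eval (q ^ (2*x))
          = (q ^ x * (q - q⁻¹)) * qint q (x - i) := by
      intro i _
      simp only [Polynomial.eval_sub, Polynomial.eval_mul, Polynomial.eval_C, Polynomial.eval_X]
      have h := factor hq hroot x (-(i:ℤ))
      rw [neg_neg] at h
      rw [h, ← sub_eq_add_neg]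
    rw [Finset.prod_congr rfl hprod, Finset.prod_mul_distrib, Finset.prod_const,
        Finset.card_erase_of_mem hn, card_range, Nat.add_sub_cancel]
    ring
  have evalQ : ∀ x : ℤ, Q.eval (q ^ (2*x)) = (q ^ x * (q - q⁻¹))^L *
      ((-1:k)^L * ∏ i ∈ range L, qint q (x + K - i)) := by
    intro x
    rw [hQdef, Polynomial.eval_mul, Polynomial.eval_C, Polynomial.eval_prod]
    have hprod : ∀ i ∈ range L,
        (Polynomial.C (q ^ ((K:ℤ) - i)) * Polynomial.X
          - Polynomial.C (q ^ ((i:ℤ) - K))).eval (q ^ (2*x))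
          = (q ^ x * (q - q⁻¹)) * qint q (x + K - i) := by
      intro i _
      simp only [Polynomial.eval_sub, Polynomial.eval_mul, Polynomial.eval_C, Polynomial.eval_X]
      have h := factor hq hroot x ((K:ℤ) - i)
      rw [show (-((K:ℤ) - i)) = (i:ℤ) - K by ring,
          show x + ((K:ℤ) - i) = x + K - i by ring] at h
      exact h
    rw [Finset.prod_congr rfl hprod, Finset.prod_mul_distrib, Finset.prod_const, card_range]
    ring
  have hlin : ∀ a b : k, (Polynomial.C a * Polynomial.X - Polynomial.C b).natDegree ≤ 1 := by
    intro a b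
    refine le_trans (Polynomial.natDegree_sub_le _ _) (max_le ?_ ?_)
    · exact le_trans (Polynomial.natDegree_C_mul_le _ _) (le_of_eq Polynomial.natDegree_X)
    · simp
  have hdegP : P.natDegree ≤ L := by
    rw [hP]
    apply Polynomial.natDegree_sum_le_of_forall_le
    intro n hn
    refine le_trans (Polynomial.natDegree_mul_le) ?_
    rw [Polynomial.natDegree_C, zero_add]
    refine le_trans (Polynomial.natDegree_prod_le _ _) ?_
    refine le_trans (Finset.sum_le_card_nsmul _ _ 1 fun i _ => hlin _ _) ?_
    rw [Finset.card_erase_of_mem hn, card_range, smul_eq_mul, mul_one]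
    omega
  have hdegQ : Q.natDegree ≤ L := by
    rw [hQdef]
    refine le_trans (Polynomial.natDegree_mul_le) ?_
    rw [Polynomial.natDegree_C, zero_add]
    refine le_trans (Polynomial.natDegree_prod_le _ _) ?_
    refine le_trans (Finset.sum_le_card_nsmul _ _ 1 fun i _ => hlin _ _) ?_
    simp
  have hPQ : P = Q := by
    have hinj : Function.Injective (fun j : Fin (L+1) => q ^ (2*((j:ℕ):ℤ))) := by
      intro a b hab
      by_contra hne
      have hne' : (a:ℕ) ≠ (b:ℕ) := fun h => hne (Fin.ext h)
      have h1 : q ^ (2*((a:ℕ):ℤ) - 2*((b:ℕ):ℤ)) = 1 := by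
        rw [zpow_sub₀ hq]
        rw [show q ^ (2*((a:ℕ):ℤ)) = q ^ (2*((b:ℕ):ℤ)) from hab]
        exact div_self (zpow_ne_zero _ hq)
      exact hroot _ (by omega) h1
    have heval : ∀ j : Fin (L+1), (P - Q).eval (q ^ (2*((j:ℕ):ℤ))) = 0 := by
      intro j
      rw [Polynomial.eval_sub, evalP, evalQ,
        inner hq hroot K L (j:ℕ) (Nat.lt_succ_iff.mp j.isLt), sub_self]
    have hz := Polynomial.eq_zero_of_natDegree_lt_card_of_eval_eq_zero (P - Q) hinj heval
      (by
        rw [Fintype.card_fin]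
        exact lt_of_le_of_lt (le_trans (Polynomial.natDegree_sub_le _ _)
          (max_le hdegP hdegQ)) (by omega))
    exact sub_eq_zero.mp hz
  have hkey := congrArg (Polynomial.eval (q ^ (2*m))) hPQ
  rw [evalP m, evalQ m] at hkey
  exact mul_left_cancel₀ (pow_ne_zero _ (mul_ne_zero (zpow_ne_zero _ hq) hd')) hkey
end star

/-- The partial fraction identity
`∑_{n=0}^{l} (−1)^n ([m−l]_q/[m−n]_q) qbinom(k, l−n) qbinom(k+n, k)
  = (−1)^l qbinom(m+k, l) qbinom(m, l)⁻¹`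
for natural numbers `k, l` and an integer `m ∉ {0, 1, …, l}`. -/
theorem qbinom_fraction_decomposition {k : Type*} [Field k]
    (q : k) (hq : q ≠ 0) (hroot : ∀ m : ℤ, m ≠ 0 → q ^ m ≠ 1)
    (K L : ℕ) (m : ℤ) (hm : ¬(0 ≤ m ∧ m ≤ (L : ℤ))) :
    ∑ n ∈ Finset.range (L + 1),
        (-1 : k) ^ n * (qint q (m - L) / qint q (m - n)) *
          qbinom q (K : ℤ) (L - n) * qbinom q ((K : ℤ) + n) K
      = (-1 : k) ^ L * qbinom q (m + K) L * (qbinom q m L)⁻¹ := by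

  have hf := qfact_ne_zero hq hroot
  have hm' : ∀ n : ℕ, n ≤ L → m - (n:ℤ) ≠ 0 := by
    intro n hn h
    exact hm ⟨by omega, by omega⟩
  have hPm : (∏ i ∈ range L, qint q (m - i)) ≠ 0 :=
    Finset.prod_ne_zero_iff.mpr fun i hi =>
      qint_ne_zero hq hroot (hm' i (by simp only [mem_range] at hi; omega))
  apply mul_right_cancel₀ hPm
  rw [Finset.sum_mul]
  have hterm : ∀ n ∈ range (L+1),
      ((-1:k)^n * (qint q (m - L) / qint q (m - n)) * qbinom q (K:ℤ) (L-n)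
        * qbinom q ((K:ℤ)+(n:ℤ)) K) * ∏ i ∈ range L, qint q (m - i)
      = ((-1:k)^n * qbinom q (K:ℤ) (L-n) * qbinom q ((K:ℤ)+(n:ℤ)) K) *
          ∏ i ∈ (range (L+1)).erase n, qint q (m - i) := by
    intro n hn
    have hn' : n ≤ L := by simp only [mem_range] at hn; omega
    have h2 : qint q (m - n) ≠ 0 := qint_ne_zero hq hroot (hm' n hn')
    have h1 : qint q (m - L) * ∏ i ∈ range L, qint q (m - i)
        = qint q (m - n) * ∏ i ∈ (range (L+1)).erase n, qint q (m - i) := by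
      rw [mul_comm, ← Finset.prod_range_succ]
      exact (Finset.mul_prod_erase _ _ hn).symm
    calc ((-1:k)^n * (qint q (m - L) / qint q (m - n)) * qbinom q (K:ℤ) (L-n)
          * qbinom q ((K:ℤ)+(n:ℤ)) K) * ∏ i ∈ range L, qint q (m - i)
        = ((-1:k)^n * qbinom q (K:ℤ) (L-n) * qbinom q ((K:ℤ)+(n:ℤ)) K) *
            ((qint q (m - L) * ∏ i ∈ range L, qint q (m - i)) * (qint q (m - n))⁻¹) := by
          rw [div_eq_mul_inv]; ring
      _ = ((-1:k)^n * qbinom q (K:ℤ) (L-n) * qbinom q ((K:ℤ)+(n:ℤ)) K) *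
            ((qint q (m - n) * ∏ i ∈ (range (L+1)).erase n, qint q (m - i)) *
              (qint q (m - n))⁻¹) := by
          rw [h1]
      _ = ((-1:k)^n * qbinom q (K:ℤ) (L-n) * qbinom q ((K:ℤ)+(n:ℤ)) K) *
            ∏ i ∈ (range (L+1)).erase n, qint q (m - i) := by
          field_simp
  rw [Finset.sum_congr rfl hterm, star hq hroot K L m]
  have hr : (-1:k)^L * qbinom q (m + (K:ℤ)) L * (qbinom q m L)⁻¹ *
      (∏ i ∈ range L, qint q (m - i))
      = (-1:k)^L * ∏ i ∈ range L, qint q (m + (K:ℤ) - i) := by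
    rw [qbinom, qbinom]
    field_simp [hf L, hPm]
  rw [hr]
end

section
/- Let γ be a scalar system of SL_n-type. For all distinct i, j ∈ {1,…,n}, every subset S ⊆ {1,…,n} with i ∉ S and j ∉ S, and every λ ∈ ℤ^n, one has γ({i},{j};λ) = γ({i},{j};λ − e_S). -/
open Finset

/-- The indicator vector `e_S ∈ ℤ^n` of a subset `S ⊆ {1,…,n}`. -/
def eVec (n : ℕ) (S : Finset (Fin n)) : Fin n → ℤ := fun i => if i ∈ S then 1 else 0

/-- A scalar system of `T\SL_n`-type: a family of scalars `γ(S,T;λ) ∈ k`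
indexed by pairs of disjoint subsets `S, T ⊆ {1,…,n}` and `λ ∈ ℤ^n`,
invariant under `λ ↦ λ + (1,…,1)` and normalized on empty sets,
satisfying the relations (i)–(vi) of Definition 5.4 of the paper. -/
structure ScalarSystem (n : ℕ) (k : Type*) [Field k] (q : k) where
  γ : Finset (Fin n) → Finset (Fin n) → (Fin n → ℤ) → k
  periodic : ∀ (S T : Finset (Fin n)) (lam : Fin n → ℤ),
    γ S T (lam + eVec n Finset.univ) = γ S T lam
  empty_left : ∀ (T : Finset (Fin n)) (lam : Fin n → ℤ), γ ∅ T lam = 1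
  empty_right : ∀ (S : Finset (Fin n)) (lam : Fin n → ℤ), γ S ∅ lam = 1
  rel1 : ∀ (S T : Finset (Fin n)) (lam : Fin n → ℤ), Disjoint S T →
    γ S T lam * γ T S (lam - eVec n S) = 1
  rel2 : ∀ (S : Finset (Fin n)) (i j : Fin n) (lam : Fin n → ℤ),
    i ≠ j → i ∉ S → j ∉ S →
    γ (insert i S) {j} lam * γ {j} S (lam - eVec n S)
      + γ (insert j S) {i} lam * γ {i} S (lam - eVec n S) = q + q⁻¹
  rel3 : ∀ (S : Finset (Fin n)) (i j : Fin n) (lam : Fin n → ℤ),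
    i ≠ j → i ∉ S → j ∉ S →
    γ S {i} lam * γ {i} (insert j S) (lam - eVec n (insert j S))
      = γ (insert i S) {j} (lam - eVec n {j}) * γ {j} S (lam - eVec n (insert j S))
  rel4 : ∀ (S T U : Finset (Fin n)) (lam : Fin n → ℤ),
    Disjoint S T → Disjoint S U → Disjoint T U →
    γ S T (lam + eVec n U) * γ (S ∪ T) U lam = γ S (T ∪ U) lam * γ T U lam
  rel5 : ∀ (i j : Fin n) (lam : Fin n → ℤ), i ≠ j →
    γ {i} {j} lam + γ {j} {i} lam = q + q⁻¹
  rel6 : ∀ (i j l : Fin n) (lam : Fin n → ℤ), i ≠ j → j ≠ l → i ≠ l →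
    γ {i} {j, l} lam + γ {j} {l, i} lam + γ {l} {i, j} lam
      = q * q + 1 + q⁻¹ * q⁻¹

/-!
Everything reduces to a single index `l ∉ {i, j}`, where only `i, j, l` are involved. Relation (iv)
gives `γ({i},{j};λ+e_l)·γ({i,j},{l};λ) = γ({i},{j,l};λ)·γ({j},{l};λ)`, so it suffices to know
`γ({i},{j,l};λ)` in terms of the scalars `γ({a},{b};λ)`. Relations (iv), (v), (ii) and (vi)
determine the three values `γ({i},{j,l})`, `γ({j},{l,i})`, `γ({l},{i,j})` as ratios with a common
denominator `triangleDet`, a symmetric function of `γ({i},{j}), γ({j},{l}), γ({l},{i})`;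
substituting them yields `γ({i},{j};λ+e_l) = γ({i},{j};λ)` as soon as `q + q⁻¹ ≠ 0`.
-/

lemma eVec_insert {n : ℕ} {a : Fin n} {s : Finset (Fin n)} (ha : a ∉ s) :
    eVec n (insert a s) = eVec n s + eVec n {a} := by
  funext x
  by_cases hx : x = a
  · subst hx; simp [eVec, ha]
  · simp [eVec, hx]

lemma add_inv_ne_zero_of_pow_four_ne_one {K : Type*} [Field K] {q : K} (hq : q ≠ 0)
    (h4 : q ^ 4 ≠ 1) : q + q⁻¹ ≠ 0 := by
  intro h
  have hsq : q ^ 2 = -1 := by linear_combination q * h - mul_inv_cancel₀ hq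
  exact h4 (by linear_combination (q ^ 2 - 1) * hsq)

namespace ScalarSystem

variable {n : ℕ} {k : Type*} [Field k] {q : k} (Γ : ScalarSystem n k q)

lemma gamma_ne_zero {S T : Finset (Fin n)} (h : Disjoint S T) (lam : Fin n → ℤ) :
    Γ.γ S T lam ≠ 0 :=
  left_ne_zero_of_mul_eq_one (Γ.rel1 S T lam h)

lemma gamma_sub_eVec_eq_inv {S T : Finset (Fin n)} (h : Disjoint S T) (lam : Fin n → ℤ) :
    Γ.γ T S (lam - eVec n S) = (Γ.γ S T lam)⁻¹ :=
  eq_inv_of_mul_eq_one_right (Γ.rel1 S T lam h)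

variable {i j l : Fin n}

lemma gamma_add_eVec_mul_gamma_pair (hij : i ≠ j) (hjl : j ≠ l) (hil : i ≠ l)
    (lam : Fin n → ℤ) :
    Γ.γ {i} {j} (lam + eVec n {l}) * Γ.γ {i, j} {l} lam
      = Γ.γ {i} {j, l} lam * Γ.γ {j} {l} lam := by
  simpa only [← Finset.insert_eq] using
    Γ.rel4 {i} {j} {l} lam (by simpa using hij) (by simpa using hil) (by simpa using hjl)

lemma add_inv_mul_gamma_pair (hij : i ≠ j) (hjl : j ≠ l) (hil : i ≠ l) (lam : Fin n → ℤ) :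
    (q + q⁻¹) * Γ.γ {i, j} {l} lam
      = Γ.γ {i} {j, l} lam * Γ.γ {j} {l} lam + Γ.γ {j} {i, l} lam * Γ.γ {i} {l} lam := by
  have hi := Γ.gamma_add_eVec_mul_gamma_pair hij hjl hil lam
  have hj := Γ.gamma_add_eVec_mul_gamma_pair hij.symm hil hjl lam
  rw [Finset.pair_comm j i] at hj
  linear_combination hi + hj - Γ.γ {i, j} {l} lam * Γ.rel5 i j (lam + eVec n {l}) hij

lemma gamma_pair_mul_add_gamma_pair_mul (hij : i ≠ j) (hjl : j ≠ l) (hil : i ≠ l)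
    (lam : Fin n → ℤ) :
    Γ.γ {i, j} {l} lam * Γ.γ {i} {j} lam + Γ.γ {i, l} {j} lam * Γ.γ {i} {l} lam
      = (q + q⁻¹) * Γ.γ {i} {j} lam * Γ.γ {i} {l} lam := by
  have h := Γ.rel2 {i} j l lam hjl (by simpa using hij.symm) (by simpa using hil.symm)
  rw [Γ.gamma_sub_eVec_eq_inv (by simpa using hil), Γ.gamma_sub_eVec_eq_inv (by simpa using hij),
    ← Finset.pair_comm i j, ← Finset.pair_comm i l] at h
  have hj := mul_inv_cancel₀ (Γ.gamma_ne_zero (S := {i}) (T := {j}) (by simpa using hij) lam)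
  have hl := mul_inv_cancel₀ (Γ.gamma_ne_zero (S := {i}) (T := {l}) (by simpa using hil) lam)
  linear_combination Γ.γ {i} {j} lam * Γ.γ {i} {l} lam * h
    - Γ.γ {i, j} {l} lam * Γ.γ {i} {j} lam * hl - Γ.γ {i, l} {j} lam * Γ.γ {i} {l} lam * hj

lemma sum_gamma_single_pair (hq : q ≠ 0) (hij : i ≠ j) (hjl : j ≠ l) (hil : i ≠ l)
    (lam : Fin n → ℤ) :
    Γ.γ {i} {j, l} lam + Γ.γ {j} {l, i} lam + Γ.γ {l} {i, j} lam = (q + q⁻¹) ^ 2 - 1 := by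
  linear_combination Γ.rel6 i j l lam hij hjl hil - 2 * mul_inv_cancel₀ hq

def triangleDet (i j l : Fin n) (lam : Fin n → ℤ) : k :=
  (q + q⁻¹) ^ 2 - (q + q⁻¹) * (Γ.γ {i} {j} lam + Γ.γ {j} {l} lam + Γ.γ {l} {i} lam)
    + (Γ.γ {i} {j} lam * Γ.γ {j} {l} lam + Γ.γ {j} {l} lam * Γ.γ {l} {i} lam
      + Γ.γ {l} {i} lam * Γ.γ {i} {j} lam)

lemma triangleDet_rotate (i j l : Fin n) (lam : Fin n → ℤ) :
    Γ.triangleDet j l i lam = Γ.triangleDet i j l lam := by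
  unfold triangleDet; ring

lemma gamma_single_pair_mul_triangleDet (hq : q ≠ 0) (hij : i ≠ j) (hjl : j ≠ l)
    (hil : i ≠ l) (lam : Fin n → ℤ) :
    Γ.γ {i} {j, l} lam * Γ.triangleDet i j l lam = Γ.γ {i} {j} lam * Γ.γ {i} {l} lam := by
  have hij_l := Γ.add_inv_mul_gamma_pair hij hjl hil lam
  have hli_j := Γ.add_inv_mul_gamma_pair hil.symm hij hjl.symm lam
  rw [Finset.pair_comm l i, Finset.pair_comm l j] at hli_j
  have hsum := Γ.sum_gamma_single_pair hq hij hjl hil lam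
  rw [Finset.pair_comm l i] at hsum
  have hpair := Γ.gamma_pair_mul_add_gamma_pair_mul hij hjl hil lam
  have hT : Γ.γ {i} {j, l} lam * (Γ.γ {i} {j} lam * Γ.γ {j} {l} lam
      + Γ.γ {l} {j} lam * Γ.γ {i} {l} lam - Γ.γ {i} {j} lam * Γ.γ {i} {l} lam)
      = Γ.γ {i} {j} lam * Γ.γ {i} {l} lam := by
    linear_combination (q + q⁻¹) * hpair - Γ.γ {i} {j} lam * hij_l
      - Γ.γ {i} {l} lam * hli_j - Γ.γ {i} {j} lam * Γ.γ {i} {l} lam * hsum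
  have hlj : Γ.γ {l} {j} lam = q + q⁻¹ - Γ.γ {j} {l} lam := by
    linear_combination Γ.rel5 l j lam hjl.symm
  have hil' : Γ.γ {i} {l} lam = q + q⁻¹ - Γ.γ {l} {i} lam := by
    linear_combination Γ.rel5 i l lam hil
  rw [hlj, hil'] at hT
  rw [hil', triangleDet]
  linear_combination hT

lemma gamma_single_add_eVec_single (hq : q ≠ 0) (hβ : q + q⁻¹ ≠ 0) (hij : i ≠ j)
    (hjl : j ≠ l) (hil : i ≠ l) (lam : Fin n → ℤ) :
    Γ.γ {i} {j} (lam + eVec n {l}) = Γ.γ {i} {j} lam := by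
  have hshift := Γ.gamma_add_eVec_mul_gamma_pair hij hjl hil lam
  have hpair := Γ.add_inv_mul_gamma_pair hij hjl hil lam
  have hi := Γ.gamma_single_pair_mul_triangleDet hq hij hjl hil lam
  have hj := Γ.gamma_single_pair_mul_triangleDet hq hjl hil.symm hij.symm lam
  rw [triangleDet_rotate, Finset.pair_comm l i] at hj
  have hT : Γ.triangleDet i j l lam ≠ 0 := right_ne_zero_of_mul <| hi ▸
    mul_ne_zero (Γ.gamma_ne_zero (by simpa using hij) lam)
      (Γ.gamma_ne_zero (by simpa using hil) lam)
  have hB : Γ.γ {i, j} {l} lam ≠ 0 := Γ.gamma_ne_zero (by simp [hil.symm, hjl.symm]) lam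
  refine mul_right_cancel₀ hB (hshift.trans (mul_left_cancel₀ (mul_ne_zero hβ hT) ?_))
  -- `hi`, `hj` and (v) turn `γ({i},{j}) · triangleDet · hpair` into the goal:
  -- `γ({j},{i,l}) γ({i},{j}) γ({i},{l}) = γ({i},{j,l}) γ({j},{l}) γ({j},{i})` up to `triangleDet`
  linear_combination -Γ.γ {i} {j} lam * Γ.triangleDet i j l lam * hpair
    - Γ.γ {i} {j} lam * Γ.γ {i} {l} lam * hj + Γ.γ {j} {l} lam * Γ.γ {j} {i} lam * hi
    - Γ.γ {i} {j, l} lam * Γ.triangleDet i j l lam * Γ.γ {j} {l} lam * Γ.rel5 i j lam hij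

lemma gamma_single_sub_eVec (hq : q ≠ 0) (hβ : q + q⁻¹ ≠ 0) (hij : i ≠ j)
    {S : Finset (Fin n)} (hiS : i ∉ S) (hjS : j ∉ S) (lam : Fin n → ℤ) :
    Γ.γ {i} {j} (lam - eVec n S) = Γ.γ {i} {j} lam := by
  induction S using Finset.induction_on generalizing lam with
  | empty => congr; funext x; simp [eVec]
  | @insert a s ha ih =>
    rw [Finset.mem_insert, not_or] at hiS hjS
    rw [eVec_insert ha, ← sub_sub, ← ih hiS.2 hjS.2 lam]
    have h := Γ.gamma_single_add_eVec_single hq hβ hij hjS.1 hiS.1 (lam - eVec n s - eVec n {a})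
    rwa [sub_add_cancel, eq_comm] at h

end ScalarSystem

theorem scalarSystem_single_shift_invariant_general {n : ℕ}
    {k : Type*} [Field k]
    (q : k) (hq : q ≠ 0) (hroot : ∀ m : ℤ, m ≠ 0 → q ^ m ≠ 1)
    (Γ : ScalarSystem n k q) :
    ∀ (i j : Fin n) (S : Finset (Fin n)) (lam : Fin n → ℤ),
      i ≠ j → i ∉ S → j ∉ S →
      Γ.γ {i} {j} lam = Γ.γ {i} {j} (lam - eVec n S) := by
  have hβ : q + q⁻¹ ≠ 0 :=
    add_inv_ne_zero_of_pow_four_ne_one hq (by simpa using hroot 4 (by norm_num))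
  intro i j S lam hij hiS hjS
  exact (Γ.gamma_single_sub_eVec hq hβ hij hiS hjS lam).symm

/-- Proposition 5.8 (ii): `γ({i},{j};λ) = γ({i},{j};λ − e_S)` when
`i, j ∉ S` are distinct, for a scalar system of `SL_n`-type. -/
theorem scalarSystem_single_shift_invariant {n : ℕ} (hn : 1 ≤ n)
    {k : Type*} [Field k] [CharZero k]
    (q : k) (hq : q ≠ 0) (hroot : ∀ m : ℤ, m ≠ 0 → q ^ m ≠ 1)
    (Γ : ScalarSystem n k q) :
    ∀ (i j : Fin n) (S : Finset (Fin n)) (lam : Fin n → ℤ),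
      i ≠ j → i ∉ S → j ∉ S →
      Γ.γ {i} {j} lam = Γ.γ {i} {j} (lam - eVec n S) :=
  scalarSystem_single_shift_invariant_general q hq hroot Γ
end

section
/- Let γ be a scalar system of SL_n-type. For all disjoint subsets S, T ⊆ {1,…,n} and every λ ∈ ℤ^n, one has γ(S,T;λ−e_T) = ∏_{i∈S} ∏_{j∈T} γ({i},{j};λ−e_j). -/
open Finset

namespace SSAux
variable {n : ℕ} {k : Type*} [Field k] {q : k}

lemma two_ne (hq : q ≠ 0) (hroot : ∀ m : ℤ, m ≠ 0 → q ^ m ≠ 1) : q + q⁻¹ ≠ 0 := by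
  intro h
  have hinv : q⁻¹ = -q := by linear_combination h
  have h1 : q * q⁻¹ = 1 := mul_inv_cancel₀ hq
  rw [hinv] at h1
  have hq2 : q ^ 2 = -1 := by linear_combination -h1
  have h4 : q ^ (4 : ℕ) = 1 := by
    rw [show (4:ℕ) = 2*2 by rfl, pow_mul, hq2]; norm_num
  exact hroot 4 (by norm_num)
    (by rw [show (4:ℤ) = ((4:ℕ):ℤ) by norm_num, zpow_natCast]; exact h4)

lemma eVec_empty : eVec n (∅ : Finset (Fin n)) = 0 := by
  funext i; simp [eVec]

lemma eVec_insert {a : Fin n} {U : Finset (Fin n)} (ha : a ∉ U) :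
    eVec n (insert a U) = eVec n {a} + eVec n U := by
  funext i
  simp only [eVec, Finset.mem_insert, Finset.mem_singleton, Pi.add_apply]
  by_cases h1 : i = a
  · subst h1; simp [ha]
  · simp [h1]

lemma gne (Γ : ScalarSystem n k q) {S T : Finset (Fin n)} (h : Disjoint S T)
    (lam : Fin n → ℤ) : Γ.γ S T lam ≠ 0 :=
  left_ne_zero_of_mul_eq_one (Γ.rel1 S T lam h)

/-- Core local lemma: shift invariance of pair scalars in a third direction,
and the σ = 1 identity. -/
lemma key (Γ : ScalarSystem n k q) (hq0 : q ≠ 0) (h2 : q + q⁻¹ ≠ 0)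
    {i j l : Fin n} (hij : i ≠ j) (hjl : j ≠ l) (hil : i ≠ l) (lam : Fin n → ℤ) :
    Γ.γ {i} {j} (lam + eVec n {l}) = Γ.γ {i} {j} lam ∧
    (q + q⁻¹) ^ 2
        - (q + q⁻¹) * (Γ.γ {i} {j} lam + Γ.γ {j} {l} lam + Γ.γ {l} {i} lam)
        + (Γ.γ {i} {j} lam * Γ.γ {j} {l} lam + Γ.γ {j} {l} lam * Γ.γ {l} {i} lam
            + Γ.γ {l} {i} lam * Γ.γ {i} {j} lam) = 1 := by
  have dij : Disjoint ({i} : Finset (Fin n)) {j} := Finset.disjoint_singleton.mpr hij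
  have dji : Disjoint ({j} : Finset (Fin n)) {i} := Finset.disjoint_singleton.mpr hij.symm
  have djl : Disjoint ({j} : Finset (Fin n)) {l} := Finset.disjoint_singleton.mpr hjl
  have dlj : Disjoint ({l} : Finset (Fin n)) {j} := Finset.disjoint_singleton.mpr hjl.symm
  have dil : Disjoint ({i} : Finset (Fin n)) {l} := Finset.disjoint_singleton.mpr hil
  have dli : Disjoint ({l} : Finset (Fin n)) {i} := Finset.disjoint_singleton.mpr hil.symm
  -- nonzero facts
  have hx0 : Γ.γ {i} {j} lam ≠ 0 := gne Γ dij lam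
  have hy0 : Γ.γ {j} {l} lam ≠ 0 := gne Γ djl lam
  have hz0 : Γ.γ {l} {i} lam ≠ 0 := gne Γ dli lam
  have hY0 : Γ.γ {l} {j} lam ≠ 0 := gne Γ dlj lam
  have hZ0 : Γ.γ {i} {l} lam ≠ 0 := gne Γ dil lam
  -- raw relation instances
  have raw1 := Γ.rel4 {i} {j} {l} lam dij dil djl
  have raw2 := Γ.rel4 {j} {i} {l} lam dji djl dil
  have raw3 := Γ.rel4 {i} {l} {j} lam dil dij dlj
  have raw4 := Γ.rel4 {l} {i} {j} lam dli dlj dij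
  have raw5 := Γ.rel4 {j} {l} {i} lam djl dji dli
  have raw6 := Γ.rel4 {l} {j} {i} lam dlj dli dji
  simp only [← Finset.insert_eq] at raw1 raw2 raw3 raw4 raw5 raw6
  rw [Finset.pair_comm j i] at raw2
  rw [Finset.pair_comm l j] at raw3
  rw [Finset.pair_comm l i] at raw4
  rw [Finset.pair_comm l i] at raw5
  rw [Finset.pair_comm l j, Finset.pair_comm j i] at raw6
  have raw7 := Γ.rel6 i j l lam hij hjl hil
  rw [Finset.pair_comm l i] at raw7
  have raw8 := Γ.rel2 {l} i j lam hij (by simp [hil]) (by simp [hjl])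
  have raw9 := Γ.rel1 {l} {j} lam dlj
  have raw10 := Γ.rel1 {l} {i} lam dli
  have raw11 := Γ.rel2 {j} i l lam hil (by simp [hij]) (by simp [hjl.symm])
  rw [Finset.pair_comm l j] at raw11
  have raw12 := Γ.rel1 {j} {l} lam djl
  have raw13 := Γ.rel1 {j} {i} lam dji
  have raw14 := Γ.rel2 {i} j l lam hjl (by simp [hij.symm]) (by simp [hil.symm])
  rw [Finset.pair_comm j i, Finset.pair_comm l i] at raw14
  have raw15 := Γ.rel1 {i} {l} lam dil
  have raw16 := Γ.rel1 {i} {j} lam dij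
  have h5x := Γ.rel5 i j lam hij
  have h5y := Γ.rel5 j l lam hjl
  have h5z := Γ.rel5 l i lam hil.symm
  have ha := Γ.rel5 i j (lam + eVec n {l}) hij
  have hb := Γ.rel5 i l (lam + eVec n {j}) hil
  have hc := Γ.rel5 j l (lam + eVec n {i}) hjl
  have hone : q * q⁻¹ = 1 := mul_inv_cancel₀ hq0
  -- abbreviations
  set x := Γ.γ {i} {j} lam with hxd
  set X := Γ.γ {j} {i} lam with hXd
  set y := Γ.γ {j} {l} lam with hyd
  set Y := Γ.γ {l} {j} lam with hYd
  set z := Γ.γ {l} {i} lam with hzd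
  set Z := Γ.γ {i} {l} lam with hZd
  set P := Γ.γ {i, l} {j} lam with hPd
  set Q := Γ.γ {j, l} {i} lam with hQd
  set R := Γ.γ {i, j} {l} lam with hRd
  set Gi := Γ.γ {i} {j, l} lam with hGid
  set Gj := Γ.γ {j} {i, l} lam with hGjd
  set Gl := Γ.γ {l} {i, j} lam with hGld
  set a1 := Γ.γ {i} {j} (lam + eVec n {l}) with ha1d
  set a2 := Γ.γ {j} {i} (lam + eVec n {l}) with ha2d
  set b1 := Γ.γ {i} {l} (lam + eVec n {j}) with hb1d
  set b2 := Γ.γ {l} {i} (lam + eVec n {j}) with hb2d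
  set c1 := Γ.γ {j} {l} (lam + eVec n {i}) with hc1d
  set cc2 := Γ.γ {l} {j} (lam + eVec n {i}) with hcc2d
  set y1 := Γ.γ {j} {l} (lam - eVec n {l}) with hy1d
  set z1 := Γ.γ {i} {l} (lam - eVec n {l}) with hz1d
  set Y1 := Γ.γ {l} {j} (lam - eVec n {j}) with hY1d
  set x1 := Γ.γ {i} {j} (lam - eVec n {j}) with hx1d
  set zz := Γ.γ {l} {i} (lam - eVec n {i}) with hzzd
  set XX := Γ.γ {j} {i} (lam - eVec n {i}) with hXXd
  -- derived equations (capitals eliminated)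
  have A2 : ((q+q⁻¹) - a1) * R = Gj * ((q+q⁻¹) - z) := by
    linear_combination raw2 - R*ha + Gj*h5z
  have A3 : ((q+q⁻¹) - b2) * P = Gi * ((q+q⁻¹) - y) := by
    linear_combination raw3 - P*hb + Gi*h5y
  have A6 : ((q+q⁻¹) - c1) * Q = Gl * ((q+q⁻¹) - x) := by
    linear_combination raw6 - Q*hc + Gl*h5x
  have A9 : ((q+q⁻¹) - y) * y1 = 1 := by linear_combination raw9 - y1*h5y
  have A13 : ((q+q⁻¹) - x) * x1 = 1 := by linear_combination raw13 - x1*h5x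
  have A15 : ((q+q⁻¹) - z) * zz = 1 := by linear_combination raw15 - zz*h5z
  have B1 : (q+q⁻¹)*R = Gi*y + Gj*((q+q⁻¹) - z) := by linear_combination raw1 + A2
  have B2 : (q+q⁻¹)*P = Gi*((q+q⁻¹) - y) + Gl*x := by linear_combination raw4 + A3
  have B3 : (q+q⁻¹)*Q = Gj*z + Gl*((q+q⁻¹) - x) := by linear_combination raw5 + A6
  have B4 : R*x + P*((q+q⁻¹) - z) = (q+q⁻¹)*((q+q⁻¹) - z)*x := by
    linear_combination (((q+q⁻¹) - z)*x)*raw14 - (R*x)*A15 - (P*((q+q⁻¹) - z))*raw16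
  have B5 : P*z + Q*((q+q⁻¹) - y) = (q+q⁻¹)*((q+q⁻¹) - y)*z := by
    linear_combination (((q+q⁻¹) - y)*z)*raw8 - (P*z)*A9 - (Q*((q+q⁻¹) - y))*raw10
  have B6 : R*((q+q⁻¹) - x) + Q*y = (q+q⁻¹)*((q+q⁻¹) - x)*y := by
    linear_combination (((q+q⁻¹) - x)*y)*raw11 - (R*((q+q⁻¹) - x))*raw12 - (Q*y)*A13
  have B7 : Gi*((q+q⁻¹)^2 - (q+q⁻¹)*(x+y+z) + (x*y+y*z+z*x)) = ((q+q⁻¹) - z)*x := by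
    linear_combination (-x)*B1 - ((q+q⁻¹) - z)*B2 + (q+q⁻¹)*B4
      - (((q+q⁻¹) - z)*x)*raw7 + (2*((q+q⁻¹) - z)*x)*hone
  have B8 : Gl*((q+q⁻¹)^2 - (q+q⁻¹)*(x+y+z) + (x*y+y*z+z*x)) = ((q+q⁻¹) - y)*z := by
    linear_combination (-z)*B2 - ((q+q⁻¹) - y)*B3 + (q+q⁻¹)*B5
      - (((q+q⁻¹) - y)*z)*raw7 + (2*((q+q⁻¹) - y)*z)*hone
  have B9 : Gj*((q+q⁻¹)^2 - (q+q⁻¹)*(x+y+z) + (x*y+y*z+z*x)) = ((q+q⁻¹) - x)*y := by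
    linear_combination (-((q+q⁻¹) - x))*B1 - y*B3 + (q+q⁻¹)*B6
      - (((q+q⁻¹) - x)*y)*raw7 + (2*((q+q⁻¹) - x)*y)*hone
  have hcy : (q+q⁻¹) - y = Y := by linear_combination -h5y
  have hcz : (q+q⁻¹) - z = Z := by linear_combination -h5z
  have hcy0 : (q+q⁻¹) - y ≠ 0 := by rw [hcy]; exact hY0
  have hcz0 : (q+q⁻¹) - z ≠ 0 := by rw [hcz]; exact hZ0
  have B11 : (q+q⁻¹)*(R*((q+q⁻¹)^2 - (q+q⁻¹)*(x+y+z) + (x*y+y*z+z*x)))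
      = (q+q⁻¹)*(y*((q+q⁻¹) - z)) := by
    linear_combination ((q+q⁻¹)^2 - (q+q⁻¹)*(x+y+z) + (x*y+y*z+z*x))*B1
      + y*B7 + ((q+q⁻¹) - z)*B9
  have B12 : (q+q⁻¹)*(P*((q+q⁻¹)^2 - (q+q⁻¹)*(x+y+z) + (x*y+y*z+z*x)))
      = (q+q⁻¹)*(x*((q+q⁻¹) - y)) := by
    linear_combination ((q+q⁻¹)^2 - (q+q⁻¹)*(x+y+z) + (x*y+y*z+z*x))*B2
      + ((q+q⁻¹) - y)*B7 + x*B8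
  have B13 : (q+q⁻¹)*(Q*((q+q⁻¹)^2 - (q+q⁻¹)*(x+y+z) + (x*y+y*z+z*x)))
      = (q+q⁻¹)*(((q+q⁻¹) - x)*z) := by
    linear_combination ((q+q⁻¹)^2 - (q+q⁻¹)*(x+y+z) + (x*y+y*z+z*x))*B3
      + z*B9 + ((q+q⁻¹) - x)*B8
  have B14 : ((q+q⁻¹)*(q+q⁻¹)*(((q+q⁻¹) - y)*z))
      * (((q+q⁻¹)^2 - (q+q⁻¹)*(x+y+z) + (x*y+y*z+z*x)) - 1) = 0 := by
    linear_combination z*B12 + ((q+q⁻¹) - y)*B13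
      - ((q+q⁻¹)*((q+q⁻¹)^2 - (q+q⁻¹)*(x+y+z) + (x*y+y*z+z*x)))*B5
  have hprod : ((q+q⁻¹)*(q+q⁻¹)*(((q+q⁻¹) - y)*z)) ≠ 0 :=
    mul_ne_zero (mul_ne_zero h2 h2) (mul_ne_zero hcy0 hz0)
  have hs : (q+q⁻¹)^2 - (q+q⁻¹)*(x+y+z) + (x*y+y*z+z*x) = 1 := by
    have := (mul_eq_zero.mp B14).resolve_left hprod
    linear_combination this
  refine ⟨?_, hs⟩
  have hGi : Gi = ((q+q⁻¹) - z)*x := by linear_combination B7 - Gi*hs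
  have hRc : (q+q⁻¹)*R = (q+q⁻¹)*(y*((q+q⁻¹) - z)) := by
    linear_combination B11 - ((q+q⁻¹)*R)*hs
  have hR : R = y*((q+q⁻¹) - z) := mul_left_cancel₀ h2 hRc
  have key1 : a1*(y*((q+q⁻¹) - z)) = x*(y*((q+q⁻¹) - z)) := by
    linear_combination raw1 + y*hGi - a1*hR
  exact mul_right_cancel₀ (mul_ne_zero hy0 hcz0) key1

/-- The determinant fact: `g_ij g_jl g_li + g_ji g_lj g_il = [2]`. -/
lemma Dfact (Γ : ScalarSystem n k q) (hq0 : q ≠ 0) (h2 : q + q⁻¹ ≠ 0)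
    {i j l : Fin n} (hij : i ≠ j) (hjl : j ≠ l) (hil : i ≠ l) (lam : Fin n → ℤ) :
    Γ.γ {i} {j} lam * Γ.γ {j} {l} lam * Γ.γ {l} {i} lam
      + Γ.γ {j} {i} lam * Γ.γ {l} {j} lam * Γ.γ {i} {l} lam = q + q⁻¹ := by
  have hs := (key Γ hq0 h2 hij hjl hil lam).2
  have h5x := Γ.rel5 i j lam hij
  have h5y := Γ.rel5 j l lam hjl
  have h5z := Γ.rel5 l i lam hil.symm
  set x := Γ.γ {i} {j} lam
  set X := Γ.γ {j} {i} lam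
  set y := Γ.γ {j} {l} lam
  set Y := Γ.γ {l} {j} lam
  set z := Γ.γ {l} {i} lam
  set Z := Γ.γ {i} {l} lam
  linear_combination (q+q⁻¹)*hs + (Y*Z)*h5x + (((q+q⁻¹)-x)*Z)*h5y
    + (((q+q⁻¹)-x)*((q+q⁻¹)-y))*h5z

lemma shift_add (Γ : ScalarSystem n k q) (hq0 : q ≠ 0) (h2 : q + q⁻¹ ≠ 0)
    {i j l : Fin n} (hij : i ≠ j) (hjl : j ≠ l) (hil : i ≠ l) (lam : Fin n → ℤ) :
    Γ.γ {i} {j} (lam + eVec n {l}) = Γ.γ {i} {j} lam :=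
  (key Γ hq0 h2 hij hjl hil lam).1

lemma shift_sub (Γ : ScalarSystem n k q) (hq0 : q ≠ 0) (h2 : q + q⁻¹ ≠ 0)
    {i j l : Fin n} (hij : i ≠ j) (hjl : j ≠ l) (hil : i ≠ l) (lam : Fin n → ℤ) :
    Γ.γ {i} {j} (lam - eVec n {l}) = Γ.γ {i} {j} lam := by
  have h := shift_add Γ hq0 h2 hij hjl hil (lam - eVec n {l})
  rw [sub_add_cancel] at h; exact h.symm

lemma shift_finset (Γ : ScalarSystem n k q) (hq0 : q ≠ 0) (h2 : q + q⁻¹ ≠ 0)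
    {i j : Fin n} (hij : i ≠ j) (U : Finset (Fin n)) :
    ∀ (lam : Fin n → ℤ), i ∉ U → j ∉ U →
      Γ.γ {i} {j} (lam - eVec n U) = Γ.γ {i} {j} lam := by
  induction U using Finset.induction_on with
  | empty => intro lam _ _; rw [eVec_empty, sub_zero]
  | @insert a U haU ih =>
    intro lam hiU hjU
    have hia : i ≠ a := fun h => hiU (h ▸ Finset.mem_insert_self a U)
    have hja : j ≠ a := fun h => hjU (h ▸ Finset.mem_insert_self a U)
    have harg : lam - eVec n (insert a U) = (lam - eVec n U) - eVec n {a} := by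
      rw [eVec_insert haU]; abel
    rw [harg, shift_sub Γ hq0 h2 hij hja hia (lam - eVec n U),
      ih lam (fun h => hiU (Finset.mem_insert_of_mem h))
        (fun h => hjU (Finset.mem_insert_of_mem h))]

/-- L-form: from the R-formula for `S` one deduces the formula for `γ({b},S)`. -/
lemma Lform (Γ : ScalarSystem n k q) (hq0 : q ≠ 0) (h2 : q + q⁻¹ ≠ 0)
    {S : Finset (Fin n)} {b : Fin n} (hb : b ∉ S)
    (hRS : ∀ mu : Fin n → ℤ, Γ.γ S {b} mu = ∏ t ∈ S, Γ.γ {t} {b} mu)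
    (lam : Fin n → ℤ) :
    Γ.γ {b} S (lam - eVec n S) = ∏ t ∈ S, Γ.γ {b} {t} (lam - eVec n {t}) := by
  have hdisj : Disjoint ({b} : Finset (Fin n)) S :=
    Finset.disjoint_singleton_left.mpr hb
  have h1 := Γ.rel1 {b} S (lam - eVec n S) hdisj
  rw [hRS (lam - eVec n S - eVec n {b})] at h1
  -- rewrite each factor via shift invariance
  have hWW : ∏ t ∈ S, Γ.γ {t} {b} (lam - eVec n S - eVec n {b})
      = ∏ t ∈ S, Γ.γ {t} {b} (lam - eVec n {t} - eVec n {b}) := by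
    refine Finset.prod_congr rfl (fun t ht => ?_)
    have htb : t ≠ b := fun h => hb (h ▸ ht)
    have harg : lam - eVec n S - eVec n {b}
        = (lam - eVec n {t} - eVec n {b}) - eVec n (S.erase t) := by
      conv_lhs => rw [show S = insert t (S.erase t) from (Finset.insert_erase ht).symm]
      rw [eVec_insert (Finset.notMem_erase t S)]; abel
    rw [harg]
    exact shift_finset Γ hq0 h2 htb (S.erase t) _ (Finset.notMem_erase t S)
      (fun h => hb (Finset.mem_of_mem_erase h))
  rw [hWW] at h1
  have hPrW : (∏ t ∈ S, Γ.γ {b} {t} (lam - eVec n {t}))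
      * (∏ t ∈ S, Γ.γ {t} {b} (lam - eVec n {t} - eVec n {b})) = 1 := by
    rw [← Finset.prod_mul_distrib]
    refine Finset.prod_eq_one (fun t ht => ?_)
    have htb : t ≠ b := fun h => hb (h ▸ ht)
    exact Γ.rel1 {b} {t} (lam - eVec n {t}) (Finset.disjoint_singleton.mpr htb.symm)
  have hW0 : (∏ t ∈ S, Γ.γ {t} {b} (lam - eVec n {t} - eVec n {b})) ≠ 0 :=
    right_ne_zero_of_mul_eq_one h1
  exact mul_right_cancel₀ hW0 (h1.trans hPrW.symm)


/-- R-form: `γ(S,{c};λ) = ∏_{t∈S} γ({t},{c};λ)`. -/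
lemma Rform (Γ : ScalarSystem n k q) (hq0 : q ≠ 0) (h2 : q + q⁻¹ ≠ 0) :
    ∀ (N : ℕ) (S : Finset (Fin n)), S.card ≤ N → ∀ c, c ∉ S → ∀ lam,
      Γ.γ S {c} lam = ∏ t ∈ S, Γ.γ {t} {c} lam := by
  intro N
  induction N with
  | zero =>
    intro S hS c hc lam
    have hS0 : S = ∅ := Finset.card_eq_zero.mp (Nat.le_zero.mp hS)
    subst hS0
    simp [Γ.empty_left]
  | succ N ih =>
    intro S hS c hc lam
    by_cases hle : S.card ≤ N
    · exact ih S hle c hc lam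
    have hcard : S.card = N + 1 := by omega
    rcases Nat.eq_zero_or_pos N with hN0 | hNpos
    · subst hN0
      obtain ⟨t, rfl⟩ := Finset.card_eq_one.mp hcard
      simp
    obtain ⟨a, ha, b, hb, hab⟩ := Finset.one_lt_card.mp (by omega : 1 < S.card)
    have hca : c ≠ a := fun h => hc (h ▸ ha)
    have hcb : c ≠ b := fun h => hc (h ▸ hb)
    have hbSa : b ∈ S.erase a := Finset.mem_erase.mpr ⟨hab.symm, hb⟩
    have haSb : a ∈ S.erase b := Finset.mem_erase.mpr ⟨hab, ha⟩
    have hcSa : c ∉ S.erase a := fun h => hc (Finset.mem_of_mem_erase h)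
    have hcSb : c ∉ S.erase b := fun h => hc (Finset.mem_of_mem_erase h)
    have hSa : (S.erase a).card ≤ N := by
      rw [Finset.card_erase_of_mem ha]; omega
    have hSb : (S.erase b).card ≤ N := by
      rw [Finset.card_erase_of_mem hb]; omega
    -- pair (c, a)
    have hRa : ∀ mu, Γ.γ (S.erase a) {a} mu = ∏ t ∈ S.erase a, Γ.γ {t} {a} mu :=
      fun mu => ih (S.erase a) hSa a (Finset.notMem_erase a S) mu
    have hRca : ∀ mu, Γ.γ (S.erase a) {c} mu = ∏ t ∈ S.erase a, Γ.γ {t} {c} mu :=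
      fun mu => ih (S.erase a) hSa c hcSa mu
    have hLa := Lform Γ hq0 h2 (Finset.notMem_erase a S) hRa lam
    have hLca := Lform Γ hq0 h2 hcSa hRca lam
    have ECA := Γ.rel2 (S.erase a) c a lam hca hcSa (Finset.notMem_erase a S)
    rw [Finset.insert_erase ha, hLa, hLca] at ECA
    -- pair (c, b)
    have hRb : ∀ mu, Γ.γ (S.erase b) {b} mu = ∏ t ∈ S.erase b, Γ.γ {t} {b} mu :=
      fun mu => ih (S.erase b) hSb b (Finset.notMem_erase b S) mu
    have hRcb : ∀ mu, Γ.γ (S.erase b) {c} mu = ∏ t ∈ S.erase b, Γ.γ {t} {c} mu :=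
      fun mu => ih (S.erase b) hSb c hcSb mu
    have hLb := Lform Γ hq0 h2 (Finset.notMem_erase b S) hRb lam
    have hLcb := Lform Γ hq0 h2 hcSb hRcb lam
    have ECB := Γ.rel2 (S.erase b) c b lam hcb hcSb (Finset.notMem_erase b S)
    rw [Finset.insert_erase hb, hLb, hLcb] at ECB
    -- pair (a, b)
    have hcS0' : c ∉ (S.erase a).erase b :=
      fun h => hc (Finset.mem_of_mem_erase (Finset.mem_of_mem_erase h))
    have haS0 : a ∉ insert c ((S.erase a).erase b) := by
      simp only [Finset.mem_insert]
      rintro (h | h)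
      · exact hca h.symm
      · exact (Finset.notMem_erase a S) (Finset.mem_of_mem_erase h)
    have hbS0 : b ∉ insert c ((S.erase a).erase b) := by
      simp only [Finset.mem_insert]
      rintro (h | h)
      · exact hcb h.symm
      · exact (Finset.notMem_erase b (S.erase a)) h
    have hS0card : (insert c ((S.erase a).erase b)).card ≤ N := by
      rw [Finset.card_insert_of_notMem hcS0', Finset.card_erase_of_mem hbSa,
        Finset.card_erase_of_mem ha]
      omega
    have hRS0a : ∀ mu, Γ.γ (insert c ((S.erase a).erase b)) {a} mu
        = ∏ t ∈ insert c ((S.erase a).erase b), Γ.γ {t} {a} mu :=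
      fun mu => ih _ hS0card a haS0 mu
    have hRS0b : ∀ mu, Γ.γ (insert c ((S.erase a).erase b)) {b} mu
        = ∏ t ∈ insert c ((S.erase a).erase b), Γ.γ {t} {b} mu :=
      fun mu => ih _ hS0card b hbS0 mu
    have hMa := Lform Γ hq0 h2 haS0 hRS0a lam
    have hMb := Lform Γ hq0 h2 hbS0 hRS0b lam
    have hiaS0 : insert a (insert c ((S.erase a).erase b)) = insert c (S.erase b) := by
      rw [Finset.insert_comm, Finset.erase_right_comm, Finset.insert_erase haSb]
    have hibS0 : insert b (insert c ((S.erase a).erase b)) = insert c (S.erase a) := by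
      rw [Finset.insert_comm, Finset.insert_erase hbSa]
    have EAB := Γ.rel2 (insert c ((S.erase a).erase b)) a b lam hab haS0 hbS0
    rw [hiaS0, hibS0, hMa, hMb] at EAB
    -- X0 values and their nonvanishing
    have hX0a : (∏ t ∈ insert c (S.erase a), Γ.γ {t} {a} lam) ≠ 0 := by
      refine Finset.prod_ne_zero_iff.mpr (fun t ht => ?_)
      refine gne Γ (Finset.disjoint_singleton.mpr ?_) lam
      rcases Finset.mem_insert.mp ht with rfl | h
      · exact hca
      · exact (Finset.mem_erase.mp h).1
    have hX0b : (∏ t ∈ insert c (S.erase b), Γ.γ {t} {b} lam) ≠ 0 := by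
      refine Finset.prod_ne_zero_iff.mpr (fun t ht => ?_)
      refine gne Γ (Finset.disjoint_singleton.mpr ?_) lam
      rcases Finset.mem_insert.mp ht with rfl | h
      · exact hcb
      · exact (Finset.mem_erase.mp h).1
    have hX0c : (∏ t ∈ S, Γ.γ {t} {c} lam) ≠ 0 := by
      refine Finset.prod_ne_zero_iff.mpr (fun t ht => ?_)
      exact gne Γ (Finset.disjoint_singleton.mpr (fun h => hc (by rwa [h] at ht))) lam
    -- the pairing identities
    have pairprod : ∀ (W : Finset (Fin n)) (d : Fin n), d ∉ W →
        (∏ t ∈ W, (Γ.γ {t} {d} lam * Γ.γ {d} {t} (lam - eVec n {t}))) = 1 := by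
      intro W d hd
      refine Finset.prod_eq_one (fun t ht => ?_)
      exact Γ.rel1 {t} {d} lam (Finset.disjoint_singleton.mpr (fun h => hd (h ▸ ht)))
    have hCa : (∏ t ∈ insert c (S.erase a), Γ.γ {t} {a} lam)
        * (∏ t ∈ S.erase a, Γ.γ {a} {t} (lam - eVec n {t})) = Γ.γ {c} {a} lam := by
      rw [Finset.prod_insert hcSa, mul_assoc, ← Finset.prod_mul_distrib,
        pairprod (S.erase a) a (Finset.notMem_erase a S), mul_one]
    have hCb : (∏ t ∈ insert c (S.erase b), Γ.γ {t} {b} lam)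
        * (∏ t ∈ S.erase b, Γ.γ {b} {t} (lam - eVec n {t})) = Γ.γ {c} {b} lam := by
      rw [Finset.prod_insert hcSb, mul_assoc, ← Finset.prod_mul_distrib,
        pairprod (S.erase b) b (Finset.notMem_erase b S), mul_one]
    have hCca : (∏ t ∈ S, Γ.γ {t} {c} lam)
        * (∏ t ∈ S.erase a, Γ.γ {c} {t} (lam - eVec n {t})) = Γ.γ {a} {c} lam := by
      rw [← Finset.mul_prod_erase S (fun t => Γ.γ {t} {c} lam) ha, mul_assoc,
        ← Finset.prod_mul_distrib, pairprod (S.erase a) c hcSa, mul_one]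
    have hCcb : (∏ t ∈ S, Γ.γ {t} {c} lam)
        * (∏ t ∈ S.erase b, Γ.γ {c} {t} (lam - eVec n {t})) = Γ.γ {b} {c} lam := by
      rw [← Finset.mul_prod_erase S (fun t => Γ.γ {t} {c} lam) hb, mul_assoc,
        ← Finset.prod_mul_distrib, pairprod (S.erase b) c hcSb, mul_one]
    have hCab : (∏ t ∈ insert c (S.erase a), Γ.γ {t} {a} lam)
        * (∏ t ∈ insert c ((S.erase a).erase b), Γ.γ {a} {t} (lam - eVec n {t}))
        = Γ.γ {b} {a} lam := by
      rw [show insert c (S.erase a) = insert b (insert c ((S.erase a).erase b)) from hibS0.symm,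
        Finset.prod_insert hbS0, mul_assoc, ← Finset.prod_mul_distrib,
        pairprod _ a haS0, mul_one]
    have hCba : (∏ t ∈ insert c (S.erase b), Γ.γ {t} {b} lam)
        * (∏ t ∈ insert c ((S.erase a).erase b), Γ.γ {b} {t} (lam - eVec n {t}))
        = Γ.γ {a} {b} lam := by
      rw [show insert c (S.erase b) = insert a (insert c ((S.erase a).erase b)) from hiaS0.symm,
        Finset.prod_insert haS0, mul_assoc, ← Finset.prod_mul_distrib,
        pairprod _ b hbS0, mul_one]
    -- rewrite the L-values as inverses
    have hLa_val : (∏ t ∈ S.erase a, Γ.γ {a} {t} (lam - eVec n {t}))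
        = (∏ t ∈ insert c (S.erase a), Γ.γ {t} {a} lam)⁻¹ * Γ.γ {c} {a} lam := by
      rw [← hCa]
      exact (inv_mul_cancel_left₀ hX0a _).symm
    have hLca_val : (∏ t ∈ S.erase a, Γ.γ {c} {t} (lam - eVec n {t}))
        = (∏ t ∈ S, Γ.γ {t} {c} lam)⁻¹ * Γ.γ {a} {c} lam := by
      rw [← hCca]
      exact (inv_mul_cancel_left₀ hX0c _).symm
    have hLb_val : (∏ t ∈ S.erase b, Γ.γ {b} {t} (lam - eVec n {t}))
        = (∏ t ∈ insert c (S.erase b), Γ.γ {t} {b} lam)⁻¹ * Γ.γ {c} {b} lam := by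
      rw [← hCb]
      exact (inv_mul_cancel_left₀ hX0b _).symm
    have hLcb_val : (∏ t ∈ S.erase b, Γ.γ {c} {t} (lam - eVec n {t}))
        = (∏ t ∈ S, Γ.γ {t} {c} lam)⁻¹ * Γ.γ {b} {c} lam := by
      rw [← hCcb]
      exact (inv_mul_cancel_left₀ hX0c _).symm
    have hMa_val : (∏ t ∈ insert c ((S.erase a).erase b), Γ.γ {a} {t} (lam - eVec n {t}))
        = (∏ t ∈ insert c (S.erase a), Γ.γ {t} {a} lam)⁻¹ * Γ.γ {b} {a} lam := by
      rw [← hCab]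
      exact (inv_mul_cancel_left₀ hX0a _).symm
    have hMb_val : (∏ t ∈ insert c ((S.erase a).erase b), Γ.γ {b} {t} (lam - eVec n {t}))
        = (∏ t ∈ insert c (S.erase b), Γ.γ {t} {b} lam)⁻¹ * Γ.γ {a} {b} lam := by
      rw [← hCba]
      exact (inv_mul_cancel_left₀ hX0b _).symm
    rw [hLa_val, hLca_val] at ECA
    rw [hLb_val, hLcb_val] at ECB
    rw [hMa_val, hMb_val] at EAB
    -- final linear algebra
    have hD2 := Dfact Γ hq0 h2 hca hab hcb lam
    have Fca := Γ.rel5 c a lam hca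
    have Fcb := Γ.rel5 c b lam hcb
    have Fab := Γ.rel5 a b lam hab
    have fin : (Γ.γ S {c} lam * (∏ t ∈ S, Γ.γ {t} {c} lam)⁻¹ - 1) * (q + q⁻¹) = 0 := by
      linear_combination (Γ.γ {c} {b} lam * Γ.γ {b} {a} lam)*ECA
        - (Γ.γ {c} {b} lam * Γ.γ {b} {a} lam)*Fca
        + (Γ.γ {a} {b} lam * Γ.γ {c} {a} lam)*ECB
        - (Γ.γ {a} {b} lam * Γ.γ {c} {a} lam)*Fcb
        - (Γ.γ {c} {a} lam * Γ.γ {c} {b} lam)*EAB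
        + (Γ.γ {c} {a} lam * Γ.γ {c} {b} lam)*Fab
        - (Γ.γ S {c} lam * (∏ t ∈ S, Γ.γ {t} {c} lam)⁻¹ - 1)*hD2
    have hfin : Γ.γ S {c} lam * (∏ t ∈ S, Γ.γ {t} {c} lam)⁻¹ = 1 := by
      have := (mul_eq_zero.mp fin).resolve_right h2
      linear_combination this
    exact (mul_inv_eq_one₀ hX0c).mp hfin

end SSAux

/-- Proposition 5.8 (i): for a scalar system of `SL_n`-type and disjoint
subsets `S, T`, one has
`γ(S,T;λ−e_T) = ∏_{i∈S} ∏_{j∈T} γ({i},{j};λ−e_j)`. -/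
theorem scalarSystem_product_formula {n : ℕ} (hn : 1 ≤ n)
    {k : Type*} [Field k] [CharZero k]
    (q : k) (hq : q ≠ 0) (hroot : ∀ m : ℤ, m ≠ 0 → q ^ m ≠ 1)
    (Γ : ScalarSystem n k q) :
    ∀ (S T : Finset (Fin n)) (lam : Fin n → ℤ), Disjoint S T →
      Γ.γ S T (lam - eVec n T)
        = ∏ i ∈ S, ∏ j ∈ T, Γ.γ {i} {j} (lam - eVec n {j}) := by
  have h2 : q + q⁻¹ ≠ 0 := SSAux.two_ne hq hroot
  intro S T lam hST
  induction T using Finset.induction_on generalizing lam with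
  | empty => rw [SSAux.eVec_empty, sub_zero, Γ.empty_right]; simp
  | @insert u T huT ihT =>
    rw [Finset.disjoint_insert_right] at hST
    obtain ⟨huS, hSTd⟩ := hST
    have r4 := Γ.rel4 S T {u} (lam - eVec n T - eVec n {u}) hSTd
      (Finset.disjoint_singleton_right.mpr huS)
      (Finset.disjoint_singleton_right.mpr huT)
    rw [show lam - eVec n T - eVec n {u} + eVec n {u} = lam - eVec n T from by abel,
      show T ∪ {u} = insert u T from by rw [Finset.union_comm, ← Finset.insert_eq]] at r4
    have huST : u ∉ S ∪ T := by
      simp only [Finset.mem_union]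
      rintro (h | h)
      · exact huS h
      · exact huT h
    have hRST := SSAux.Rform Γ hq h2 ((S ∪ T).card) (S ∪ T) le_rfl u huST
      (lam - eVec n T - eVec n {u})
    have hRT := SSAux.Rform Γ hq h2 T.card T le_rfl u huT
      (lam - eVec n T - eVec n {u})
    rw [hRST, Finset.prod_union hSTd, hRT, ihT lam hSTd] at r4
    have hshift : (∏ t ∈ S, Γ.γ {t} {u} (lam - eVec n T - eVec n {u}))
        = ∏ t ∈ S, Γ.γ {t} {u} (lam - eVec n {u}) := by
      refine Finset.prod_congr rfl (fun t ht => ?_)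
      have htu : t ≠ u := fun h => huS (h ▸ ht)
      rw [show lam - eVec n T - eVec n {u} = (lam - eVec n {u}) - eVec n T from by abel]
      exact SSAux.shift_finset Γ hq h2 htu T _ (Finset.disjoint_left.mp hSTd ht) huT
    rw [hshift] at r4
    have hW0 : (∏ t ∈ T, Γ.γ {t} {u} (lam - eVec n T - eVec n {u})) ≠ 0 := by
      rw [← hRT]
      exact SSAux.gne Γ (Finset.disjoint_singleton_right.mpr huT) _
    rw [show lam - eVec n (insert u T) = lam - eVec n T - eVec n {u} from by
      rw [SSAux.eVec_insert huT]; abel]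
    simp only [Finset.prod_insert huT]
    rw [Finset.prod_mul_distrib]
    apply mul_right_cancel₀ hW0
    linear_combination -r4
end
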